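/- arXiv:1410.6539 — 6 statements merged into one kernel-verified Lean document; each statement's English description precedes it below -/
import Mathlib

section
/- Let A be a subalgebra of c₀(ℕ) containing e_n for every n ∈ ℕ, equipped with a submultiplicative norm ‖·‖_A under which A is complete (so (A, ‖·‖_A) is a Banach algebra), and suppose the span c_f(ℕ) of {e_n} is dense in (A, ‖·‖_A). Then A is spectral invariant in c₀(ℕ): an element a ∈ A has a quasi-inverse in A if and only if it has a quasi-inverse in c₀(ℕ). -/
/-! Let `a ∘ b = 0` for some sequence `b`. Approximate `a` within `N`-distance `< 1` by a finitely
supported `g`, and let `P` be the indicator of a finite set carrying `g`. The tail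
`a - a P = (a - g)(1 - P)` satisfies `N ((a - a P) ^ (k + 1)) ≤ (1 + N P) N (a - g) ^ (k + 1)`,
so its Neumann series converges in `A` and gives it a quasi-inverse `s'` there. Since `b P ∈ A`,
the element `s' ∘ b P` is a quasi-inverse of `a = (a - a P) + a P` in `A`. -/

open Filter Topology

noncomputable section

/-- `c₀(ℕ)`: complex sequences vanishing at infinity. -/
def c0 : Set (ℕ → ℂ) := {f | Filter.Tendsto f Filter.atTop (nhds (0 : ℂ))}

/-- The sup norm `‖f‖_∞`. -/
noncomputable def supNorm (f : ℕ → ℂ) : ℝ := ⨆ n, ‖f n‖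

/-- The `n`-th block seminorm `2σ(n)·max{|f(2n)+r·f(2n+1)|, σ(n)·|f(2n+1)−r·f(2n)|}`. -/
noncomputable def blockNorm (r : ℝ) (σ : ℕ → ℝ) (f : ℕ → ℂ) (n : ℕ) : ℝ :=
  2 * σ n * max (‖f (2 * n) + (r : ℂ) * f (2 * n + 1)‖)
                (σ n * ‖f (2 * n + 1) - (r : ℂ) * f (2 * n)‖)

/-- The norm `‖f‖_{r,σ} = sup_n blockNorm r σ f n`. -/
noncomputable def Anorm (r : ℝ) (σ : ℕ → ℝ) (f : ℕ → ℂ) : ℝ := ⨆ n, blockNorm r σ f n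

/-- The algebra `A_{r,σ}`: elements of `c₀(ℕ)` whose block norms tend to `0`. -/
def Aset (r : ℝ) (σ : ℕ → ℝ) : Set (ℕ → ℂ) :=
  {f | f ∈ c0 ∧ Filter.Tendsto (blockNorm r σ f) Filter.atTop (nhds (0 : ℝ))}

/-- The unit step function `e_n`. -/
def eFun (n : ℕ) : ℕ → ℂ := fun k => if k = n then 1 else 0

open Finset

theorem pow_succ_mem {M S : Type*} [Monoid M] [SetLike S M] [MulMemClass S M] {s : S} {x : M}
    (hx : x ∈ s) (k : ℕ) : x ^ (k + 1) ∈ s := by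
  induction k with
  | zero => simpa using hx
  | succ k ih => rw [pow_succ]; exact mul_mem ih hx

section SubmultiplicativeNorm

variable {𝕜 R : Type*} [NormedField 𝕜] [CommRing R] [Module 𝕜 R]

structure IsSubmultiplicativeNormOn (A : NonUnitalSubalgebra 𝕜 R) (N : R → ℝ) : Prop where
  eq_zero_iff : ∀ f ∈ A, N f = 0 ↔ f = 0
  add_le : ∀ f ∈ A, ∀ g ∈ A, N (f + g) ≤ N f + N g
  map_smul : ∀ (c : 𝕜), ∀ f ∈ A, N (c • f) = ‖c‖ * N f
  mul_le : ∀ f ∈ A, ∀ g ∈ A, N (f * g) ≤ N f * N g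

def IsCompleteOn (A : NonUnitalSubalgebra 𝕜 R) (N : R → ℝ) : Prop :=
  ∀ u : ℕ → R, (∀ k, u k ∈ A) →
    (∀ ε > (0 : ℝ), ∃ M : ℕ, ∀ m ≥ M, ∀ n ≥ M, N (u m - u n) < ε) →
    ∃ f ∈ A, Tendsto (fun k => N (u k - f)) atTop (𝓝 0)

namespace IsSubmultiplicativeNormOn

variable {A : NonUnitalSubalgebra 𝕜 R} {N : R → ℝ} {f g : R}

theorem map_zero (hN : IsSubmultiplicativeNormOn A N) : N 0 = 0 := by
  simpa using hN.map_smul 0 0 (zero_mem A)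

theorem map_neg (hN : IsSubmultiplicativeNormOn A N) (hf : f ∈ A) : N (-f) = N f := by
  simpa using hN.map_smul (-1) f hf

theorem nonneg (hN : IsSubmultiplicativeNormOn A N) (hf : f ∈ A) : 0 ≤ N f := by
  have h := hN.add_le f hf (-f) (neg_mem hf)
  rw [add_neg_cancel, hN.map_zero, hN.map_neg hf] at h
  linarith

theorem map_sub_comm (hN : IsSubmultiplicativeNormOn A N) (hf : f ∈ A) (hg : g ∈ A) :
    N (f - g) = N (g - f) := by
  rw [← neg_sub, hN.map_neg (sub_mem hg hf)]

theorem sub_le (hN : IsSubmultiplicativeNormOn A N) (hf : f ∈ A) (hg : g ∈ A) :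
    N (f - g) ≤ N f + N g := by
  simpa [sub_eq_add_neg, hN.map_neg hg] using hN.add_le f hf (-g) (neg_mem hg)

theorem sum_le (hN : IsSubmultiplicativeNormOn A N) {ι : Type*} (s : Finset ι) {u : ι → R}
    (hu : ∀ i ∈ s, u i ∈ A) : N (∑ i ∈ s, u i) ≤ ∑ i ∈ s, N (u i) := by
  classical
  induction s using Finset.induction_on with
  | empty => simp [hN.map_zero]
  | insert i s hi ih =>
    have hs : ∀ j ∈ s, u j ∈ A := fun j hj => hu j (mem_insert_of_mem hj)
    rw [sum_insert hi, sum_insert hi]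
    exact (hN.add_le _ (hu i (mem_insert_self i s)) _ (sum_mem hs)).trans (by gcongr; exact ih hs)

theorem pow_succ_le (hN : IsSubmultiplicativeNormOn A N) (hf : f ∈ A) (k : ℕ) :
    N (f ^ (k + 1)) ≤ N f ^ (k + 1) := by
  induction k with
  | zero => simp
  | succ k ih =>
    rw [pow_succ f, pow_succ (N f)]
    exact (hN.mul_le _ (pow_succ_mem hf k) _ hf).trans
      (mul_le_mul_of_nonneg_right ih (hN.nonneg hf))

theorem eq_of_tendsto (hN : IsSubmultiplicativeNormOn A N) {u : ℕ → R} (hu : ∀ k, u k ∈ A)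
    (hf : f ∈ A) (hg : g ∈ A) (huf : Tendsto (fun k => N (u k - f)) atTop (𝓝 0))
    (hug : Tendsto (fun k => N (u k - g)) atTop (𝓝 0)) : f = g := by
  have hfg := sub_mem hf hg
  refine sub_eq_zero.mp ((hN.eq_zero_iff _ hfg).mp (le_antisymm ?_ (hN.nonneg hfg)))
  refine ge_of_tendsto' (by simpa using hug.add huf) fun k => ?_
  calc N (f - g) = N ((u k - g) - (u k - f)) := by rw [sub_sub_sub_cancel_left]
    _ ≤ N (u k - g) + N (u k - f) := hN.sub_le (sub_mem (hu k) hg) (sub_mem (hu k) hf)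

theorem exists_tendsto_sum_range (hN : IsSubmultiplicativeNormOn A N) (hc : IsCompleteOn A N)
    {u : ℕ → R} (hu : ∀ i, u i ∈ A) (hs : Summable fun i => N (u i)) :
    ∃ w ∈ A, Tendsto (fun p => N (∑ i ∈ range p, u i - w)) atTop (𝓝 0) := by
  have hsum : ∀ p, ∑ i ∈ range p, u i ∈ A := fun p => sum_mem fun i _ => hu i
  have hle : ∀ p q, p ≤ q → N (∑ i ∈ range q, u i - ∑ i ∈ range p, u i) ≤
      dist (∑ i ∈ range q, N (u i)) (∑ i ∈ range p, N (u i)) := fun p q hpq => by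
    rw [← sum_Ico_eq_sub _ hpq, Real.dist_eq, ← sum_Ico_eq_sub _ hpq]
    exact (hN.sum_le _ fun i _ => hu i).trans (le_abs_self _)
  refine hc _ hsum fun ε hε => ?_
  obtain ⟨M, hM⟩ := Metric.cauchySeq_iff.mp hs.hasSum.tendsto_sum_nat.cauchySeq ε hε
  refine ⟨M, fun m hm n hn => ?_⟩
  rcases le_total n m with h | h
  · exact (hle n m h).trans_lt (hM m hm n hn)
  · rw [hN.map_sub_comm (hsum m) (hsum n)]
    exact (hle m n h).trans_lt (hM n hn m hm)

theorem exists_quasiInverse_of_summable (hN : IsSubmultiplicativeNormOn A N)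
    (hc : IsCompleteOn A N) {x : R} (hx : x ∈ A) (hs : Summable fun k => N (x ^ (k + 1))) :
    ∃ y ∈ A, x + y - x * y = 0 := by
  obtain ⟨w, hw, hlim⟩ := hN.exists_tendsto_sum_range hc (pow_succ_mem hx) hs
  set u : ℕ → R := fun p => ∑ i ∈ range p, x ^ (i + 1)
  have hu : ∀ p, u p ∈ A := fun p => sum_mem fun i _ => pow_succ_mem hx i
  have hrec : ∀ p, u (p + 1) = u p * x + x := fun p => by
    simp only [u, sum_range_succ', sum_mul, ← pow_succ, zero_add, pow_one]
  have hlim' : Tendsto (fun p => N (u (p + 1) - (w * x + x))) atTop (𝓝 0) := by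
    refine squeeze_zero (fun p => hN.nonneg (sub_mem (hu _) (add_mem (mul_mem hw hx) hx)))
      (fun p => ?_) (by simpa using hlim.mul_const (N x))
    rw [hrec, add_sub_add_right_eq_sub, ← sub_mul]
    exact hN.mul_le _ (sub_mem (hu p) hw) _ hx
  have hfix : w = w * x + x := hN.eq_of_tendsto (fun p => hu (p + 1)) hw
    (add_mem (mul_mem hw hx) hx) (hlim.comp (tendsto_add_atTop_nat 1)) hlim'
  exact ⟨-w, neg_mem hw, by linear_combination -hfix⟩

theorem pow_succ_sub_mul_idempotent_le (hN : IsSubmultiplicativeNormOn A N) {d P : R}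
    (hd : d ∈ A) (hP : P ∈ A) (hPP : IsIdempotentElem P) (k : ℕ) :
    N ((d - d * P) ^ (k + 1)) ≤ (1 + N P) * N d ^ (k + 1) := by
  have hdk := pow_succ_mem hd k
  have hpow : (d - d * P) ^ (k + 1) = d ^ (k + 1) - d ^ (k + 1) * P := by
    rw [← mul_one_sub, mul_pow, hPP.one_sub.pow_succ_eq, mul_one_sub]
  rw [hpow]
  calc _ ≤ N (d ^ (k + 1)) + N (d ^ (k + 1) * P) := hN.sub_le hdk (mul_mem hdk hP)
    _ ≤ N (d ^ (k + 1)) + N (d ^ (k + 1)) * N P := by gcongr; exact hN.mul_le _ hdk _ hP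
    _ = (1 + N P) * N (d ^ (k + 1)) := by ring
    _ ≤ (1 + N P) * N d ^ (k + 1) := by
      gcongr
      · linarith [hN.nonneg hP]
      · exact hN.pow_succ_le hd k

theorem exists_quasiInverse_of_idempotent_approx (hN : IsSubmultiplicativeNormOn A N)
    (hc : IsCompleteOn A N) {a b g P : R} (ha : a ∈ A) (hab : a + b - a * b = 0) (hg : g ∈ A)
    (hP : P ∈ A) (hPP : IsIdempotentElem P) (hgP : g * P = g) (hbP : b * P ∈ A)
    (hag : N (a - g) < 1) : ∃ b' ∈ A, a + b' - a * b' = 0 := by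
  have hd : a - g ∈ A := sub_mem ha hg
  have hsplit : a - a * P = (a - g) - (a - g) * P := by linear_combination -hgP
  have hs : Summable fun k => N ((a - a * P) ^ (k + 1)) := by
    refine .of_nonneg_of_le (fun k => hN.nonneg (pow_succ_mem (sub_mem ha (mul_mem ha hP)) k))
      (fun k => ?_) ((summable_geometric_of_lt_one (hN.nonneg hd) hag).mul_left
        ((1 + N P) * N (a - g)))
    rw [hsplit, mul_assoc, ← pow_succ']
    exact hN.pow_succ_sub_mul_idempotent_le hd hP hPP k
  obtain ⟨s', hs', hss'⟩ := hN.exists_quasiInverse_of_summable hc (sub_mem ha (mul_mem ha hP)) hs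
  exact ⟨s' + b * P - s' * (b * P), sub_mem (add_mem hs' hbP) (mul_mem hs' hbP),
    by linear_combination hss' + (1 - s') * P * hab⟩

end IsSubmultiplicativeNormOn

end SubmultiplicativeNorm

theorem mul_indicator_one_eq_sum (f : ℕ → ℂ) (S : Finset ℕ) :
    f * (S : Set ℕ).indicator 1 = ∑ n ∈ S, f n • eFun n := by
  ext k
  simp [Set.indicator_apply, Finset.sum_apply, eFun]

theorem isIdempotentElem_indicator_one {ι M₀ : Type*} [MulZeroOneClass M₀] (s : Set ι) :
    IsIdempotentElem (s.indicator (1 : ι → M₀)) := by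
  rw [IsIdempotentElem, ← Set.inter_indicator_one, Set.inter_self]

theorem mul_indicator_one_mem {A : NonUnitalSubalgebra ℂ (ℕ → ℂ)} (heA : ∀ n, eFun n ∈ A)
    (f : ℕ → ℂ) (S : Finset ℕ) : f * (S : Set ℕ).indicator 1 ∈ A := by
  rw [mul_indicator_one_eq_sum]
  exact sum_mem fun n _ => SMulMemClass.smul_mem _ (heA n)

theorem exists_finset_mul_indicator_one_eq_self {g : ℕ → ℂ}
    (hg : g ∈ Submodule.span ℂ (Set.range eFun)) :
    ∃ S : Finset ℕ, g * (S : Set ℕ).indicator 1 = g := by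
  suffices h : ∃ S : Finset ℕ, ∀ k ∉ S, g k = 0 by
    obtain ⟨S, hS⟩ := h
    refine ⟨S, funext fun k => ?_⟩
    by_cases hk : k ∈ S <;> simp [hk, hS]
  induction hg using Submodule.span_induction with
  | mem x hx =>
    obtain ⟨n, rfl⟩ := hx
    exact ⟨{n}, fun k hk => by simp_all [eFun]⟩
  | zero => exact ⟨∅, fun _ _ => rfl⟩
  | add x y _ _ hx hy =>
    obtain ⟨S, hS⟩ := hx
    obtain ⟨T, hT⟩ := hy
    exact ⟨S ∪ T, fun k hk => by simp_all⟩
  | smul c x _ hx =>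
    obtain ⟨S, hS⟩ := hx
    exact ⟨S, fun k hk => by simp [hS k hk]⟩

/-- A dense Banach subalgebra of `c₀(ℕ)` containing all `e_n`, in which the span
`c_f(ℕ)` of the `e_n` is dense, is spectral invariant in `c₀(ℕ)`. -/
theorem spectral_invariance_of_cf_dense
    (A : NonUnitalSubalgebra ℂ (ℕ → ℂ))
    (hA : (A : Set (ℕ → ℂ)) ⊆ c0)
    (heA : ∀ n : ℕ, eFun n ∈ A)
    (N : (ℕ → ℂ) → ℝ)
    (hNdef : ∀ f ∈ A, (N f = 0 ↔ f = 0))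
    (hNadd : ∀ f ∈ A, ∀ g ∈ A, N (f + g) ≤ N f + N g)
    (hNsmul : ∀ (c : ℂ), ∀ f ∈ A, N (c • f) = ‖c‖ * N f)
    (hNmul : ∀ f ∈ A, ∀ g ∈ A, N (f * g) ≤ N f * N g)
    (hcomplete : ∀ u : ℕ → (ℕ → ℂ), (∀ k, u k ∈ A) →
      (∀ ε > (0 : ℝ), ∃ M : ℕ, ∀ m ≥ M, ∀ n ≥ M, N (u m - u n) < ε) →
      ∃ f ∈ A, Filter.Tendsto (fun k => N (u k - f)) Filter.atTop (nhds (0 : ℝ)))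
    (hdense : ∀ f ∈ A, ∀ ε > (0 : ℝ),
      ∃ g ∈ Submodule.span ℂ (Set.range eFun), N (f - g) < ε)
    (a : ℕ → ℂ) (ha : a ∈ A) :
    (∃ b ∈ A, a + b - a * b = 0 ∧ b + a - b * a = 0) ↔
    (∃ b ∈ c0, a + b - a * b = 0 ∧ b + a - b * a = 0) := by
  have hN : IsSubmultiplicativeNormOn A N := ⟨hNdef, hNadd, hNsmul, hNmul⟩
  have hspan : Submodule.span ℂ (Set.range eFun) ≤ A.toSubmodule :=
    Submodule.span_le.mpr (Set.range_subset_iff.mpr heA)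
  constructor
  · rintro ⟨b, hb, hab⟩
    exact ⟨b, hA hb, hab⟩
  · rintro ⟨b, -, hab, -⟩
    obtain ⟨g, hg, hag⟩ := hdense a ha 1 one_pos
    obtain ⟨S, hgS⟩ := exists_finset_mul_indicator_one_eq_self hg
    obtain ⟨b', hb', hab'⟩ := hN.exists_quasiInverse_of_idempotent_approx hcomplete ha hab
      (hspan hg) (by simpa using mul_indicator_one_mem heA 1 S) (isIdempotentElem_indicator_one S)
      hgS (mul_indicator_one_mem heA b S) hag
    exact ⟨b', hb', hab', by linear_combination hab'⟩
end
end

section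
/- Let r ∈ ℝ and σ ∈ [1, ∞), and set D = (1/(1+r²))·max{1 + |r|/σ, |r| + 1/σ}. Then ‖v‖_max ≤ D·‖v‖_{r,σ} for all v ∈ ℂ², and D is the smallest constant with this property: for every D' < D there exists v ∈ ℂ² with ‖v‖_max > D'·‖v‖_{r,σ}. -/
noncomputable section

/-- The `C*`-norm `‖(x,y)‖_max = max{|x|, |y|}` on `ℂ²`. -/
noncomputable def normMax (v : ℂ × ℂ) : ℝ := max ‖v.1‖ ‖v.2‖

/-- The norm `‖(x,y)‖_{r,σ} = max{|x + r·y|, σ·|y − r·x|}` on `ℂ²`. -/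
noncomputable def normRS (r σ : ℝ) (v : ℂ × ℂ) : ℝ :=
  max ‖v.1 + (r : ℂ) * v.2‖ (σ * ‖v.2 - (r : ℂ) * v.1‖)

/-- Coordinatewise multiplication on `ℂ²`. -/
def cmul (v w : ℂ × ℂ) : ℂ × ℂ := (v.1 * w.1, v.2 * w.2)

/-!
Write `a = x + r y`, `b = y - r x`, so that `‖(x, y)‖_{r,σ} = max{|a|, σ|b|}`. Inverting,
`(1 + r²) x = a - r b` and `(1 + r²) y = b + r a`, and the triangle inequality gives
`(1 + r²)|x| ≤ (1 + |r|/σ) M` and `(1 + r²)|y| ≤ (|r| + 1/σ) M` for `M = ‖(x, y)‖_{r,σ}`.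
Both bounds are attained with `M = 1`: take `(a, b) = (1, -sgn r/σ)` for the first and
`(a, b) = (sgn r, 1/σ)` for the second.
-/

namespace NormRS

variable (r : ℝ)

/-- The inverse of the linear map `(x, y) ↦ (x + r y, y - r x)` underlying `normRS`. -/
def invMap (a b : ℂ) : ℂ × ℂ :=
  ((a - r * b) / (1 + r ^ 2 : ℝ), (b + r * a) / (1 + r ^ 2 : ℝ))

lemma one_add_sq_ne_zero : ((1 + r ^ 2 : ℝ) : ℂ) ≠ 0 := by
  exact_mod_cast (by positivity : (1 + r ^ 2 : ℝ) ≠ 0)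

lemma invMap_fst_add_mul_snd (a b : ℂ) : (invMap r a b).1 + r * (invMap r a b).2 = a := by
  have := one_add_sq_ne_zero r
  simp only [invMap]
  field_simp
  push_cast
  ring

lemma invMap_snd_sub_mul_fst (a b : ℂ) : (invMap r a b).2 - r * (invMap r a b).1 = b := by
  have := one_add_sq_ne_zero r
  simp only [invMap]
  field_simp
  push_cast
  ring

lemma invMap_apply_self (v : ℂ × ℂ) : invMap r (v.1 + r * v.2) (v.2 - r * v.1) = v := by
  have := one_add_sq_ne_zero r
  ext : 1 <;> simp only [invMap] <;> field_simp <;> push_cast <;> ring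

lemma normRS_invMap (σ : ℝ) (a b : ℂ) : normRS r σ (invMap r a b) = max ‖a‖ (σ * ‖b‖) := by
  rw [normRS, invMap_fst_add_mul_snd, invMap_snd_sub_mul_fst]

lemma norm_invMap_fst (a b : ℂ) : ‖(invMap r a b).1‖ = ‖a - r * b‖ / (1 + r ^ 2) := by
  rw [invMap, norm_div, Complex.norm_real, Real.norm_of_nonneg (by positivity)]

lemma norm_invMap_snd (a b : ℂ) : ‖(invMap r a b).2‖ = ‖b + r * a‖ / (1 + r ^ 2) := by
  rw [invMap, norm_div, Complex.norm_real, Real.norm_of_nonneg (by positivity)]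

lemma norm_add_ofReal_mul_le (a b : ℂ) : ‖a + r * b‖ ≤ ‖a‖ + |r| * ‖b‖ := by
  simpa [Complex.norm_real] using norm_add_le a (r * b)

lemma norm_sub_ofReal_mul_le (a b : ℂ) : ‖a - r * b‖ ≤ ‖a‖ + |r| * ‖b‖ := by
  simpa [Complex.norm_real] using norm_sub_le a (r * b)

variable {r} {σ : ℝ}

lemma normMax_invMap_le (hσ : 0 < σ) {a b : ℂ} {M : ℝ} (ha : ‖a‖ ≤ M) (hb : σ * ‖b‖ ≤ M) :
    normMax (invMap r a b) ≤ (1 / (1 + r ^ 2)) * max (1 + |r| / σ) (|r| + 1 / σ) * M := by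
  have hb' : ‖b‖ ≤ M / σ := by rwa [le_div_iff₀' hσ]
  have hM : 0 ≤ M := (norm_nonneg a).trans ha
  rw [normMax, norm_invMap_fst, norm_invMap_snd]
  refine max_le ?_ ?_
  · calc ‖a - r * b‖ / (1 + r ^ 2) ≤ (M + |r| * (M / σ)) / (1 + r ^ 2) := by
          gcongr; exact (norm_sub_ofReal_mul_le r a b).trans (by gcongr)
      _ = (1 / (1 + r ^ 2)) * (1 + |r| / σ) * M := by ring
      _ ≤ _ := by gcongr; exact le_max_left _ _
  · calc ‖b + r * a‖ / (1 + r ^ 2) ≤ (M / σ + |r| * M) / (1 + r ^ 2) := by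
          gcongr; exact (norm_add_ofReal_mul_le r b a).trans (by gcongr)
      _ = (1 / (1 + r ^ 2)) * (|r| + 1 / σ) * M := by ring
      _ ≤ _ := by gcongr; exact le_max_right _ _

lemma normMax_le (hσ : 0 < σ) (v : ℂ × ℂ) :
    normMax v ≤ (1 / (1 + r ^ 2)) * max (1 + |r| / σ) (|r| + 1 / σ) * normRS r σ v := by
  conv_lhs => rw [← invMap_apply_self r v]
  exact normMax_invMap_le hσ (le_max_left _ _) (le_max_right _ _)

lemma exists_normRS_eq_one_le_normMax (hσ : 0 < σ) :
    ∃ v, normRS r σ v = 1 ∧ (1 / (1 + r ^ 2)) * max (1 + |r| / σ) (|r| + 1 / σ) ≤ normMax v := by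
  obtain ⟨s, hrs, hs⟩ : ∃ s : ℝ, r * s = |r| ∧ |s| ≤ 1 :=
    ⟨SignType.sign r, self_mul_sign r, by rcases SignType.sign r with _ | _ | _ <;> simp⟩
  have hσs : σ * |s / σ| = |s| := by rw [abs_div, abs_of_pos hσ, mul_div_cancel₀ _ hσ.ne']
  set v₁ := invMap r 1 (-s / σ : ℝ)
  set v₂ := invMap r s (1 / σ : ℝ)
  have hv₁ : normRS r σ v₁ = 1 := by
    rw [normRS_invMap, Complex.norm_real, Real.norm_eq_abs, neg_div, abs_neg, hσs]
    simpa using hs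
  have hv₂ : normRS r σ v₂ = 1 := by
    rw [normRS_invMap, Complex.norm_real, Complex.norm_real, Real.norm_eq_abs, Real.norm_eq_abs,
      one_div, abs_inv, abs_of_pos hσ, mul_inv_cancel₀ hσ.ne']
    exact max_eq_right hs
  have hle₁ : (1 / (1 + r ^ 2)) * (1 + |r| / σ) ≤ normMax v₁ := by
    have : (1 : ℂ) - r * (-s / σ : ℝ) = (1 + |r| / σ : ℝ) := by rw [← hrs]; push_cast; ring
    refine le_trans (le_of_eq ?_) (le_max_left _ _)
    rw [norm_invMap_fst, this, Complex.norm_real, Real.norm_of_nonneg (by positivity)]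
    ring
  have hle₂ : (1 / (1 + r ^ 2)) * (|r| + 1 / σ) ≤ normMax v₂ := by
    have : ((1 / σ : ℝ) : ℂ) + r * s = (|r| + 1 / σ : ℝ) := by rw [← hrs]; push_cast; ring
    refine le_trans (le_of_eq ?_) (le_max_right _ _)
    rw [norm_invMap_snd, this, Complex.norm_real, Real.norm_of_nonneg (by positivity)]
    ring
  rw [mul_max_of_nonneg _ _ (by positivity)]
  rcases le_total ((1 / (1 + r ^ 2)) * (1 + |r| / σ)) ((1 / (1 + r ^ 2)) * (|r| + 1 / σ)) with h | h
  · exact ⟨v₂, hv₂, by rwa [max_eq_right h]⟩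
  · exact ⟨v₁, hv₁, by rwa [max_eq_left h]⟩

end NormRS

/-- `D = (1/(1+r²))·max{1 + |r|/σ, |r| + 1/σ}` is the smallest constant with
`‖v‖_max ≤ D·‖v‖_{r,σ}` for all `v ∈ ℂ²`. -/
theorem normMax_le_D_normRS_and_optimal (r σ : ℝ) (hσ : 1 ≤ σ) :
    (∀ v : ℂ × ℂ,
      normMax v ≤ (1 / (1 + r ^ 2)) * max (1 + |r| / σ) (|r| + 1 / σ) * normRS r σ v) ∧
    (∀ D' : ℝ, D' < (1 / (1 + r ^ 2)) * max (1 + |r| / σ) (|r| + 1 / σ) →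
      ∃ v : ℂ × ℂ, D' * normRS r σ v < normMax v) := by
  have hσ₀ : 0 < σ := zero_lt_one.trans_le hσ
  refine ⟨NormRS.normMax_le hσ₀, fun D' hD' => ?_⟩
  obtain ⟨v, hv, hle⟩ := NormRS.exists_normRS_eq_one_le_normMax (r := r) hσ₀
  exact ⟨v, by rw [hv, mul_one]; exact hD'.trans_le hle⟩
end
end

section
/- Let r ∈ ℝ and σ ∈ [1, ∞), and set C = (σ/(1+r²)²)·max{ |1+r³|/σ + 2|r²−r|/σ² + |r²+r|/σ³ , |r²−r| + 2|r²+r|/σ + |1−r³|/σ² }. Then ‖v * w‖_{r,σ} ≤ C·‖v‖_{r,σ}·‖w‖_{r,σ} for all v, w ∈ ℂ². -/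
noncomputable section

/-! The proof works in the coordinates `a = x + r y`, `b = y − r x`, in which
`‖(x, y)‖_{r,σ} = max{|a|, σ|b|}`. Inverting this change of variables (its determinant is
`1 + r²`) expresses both coordinates of `(1 + r²)² · (v * w)` as bilinear forms in `(a₁, b₁)` and
`(a₂, b₂)`; with `N₁ = ‖v‖_{r,σ}`, `N₂ = ‖w‖_{r,σ}`, bounding `|aᵢ|` by `Nᵢ` and `|bᵢ|` by `Nᵢ / σ`
gives the constant term by term. -/

theorem norm_bilinear_le {𝕜 : Type*} [NormedField 𝕜] {σ N₁ N₂ : ℝ} (hσ : 0 < σ)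
    {a₁ a₂ b₁ b₂ : 𝕜} (ha₁ : ‖a₁‖ ≤ N₁) (ha₂ : ‖a₂‖ ≤ N₂)
    (hb₁ : σ * ‖b₁‖ ≤ N₁) (hb₂ : σ * ‖b₂‖ ≤ N₂) (c₁ c₂ c₃ : 𝕜) :
    ‖c₁ * (a₁ * a₂) + c₂ * (a₁ * b₂ + b₁ * a₂) + c₃ * (b₁ * b₂)‖ ≤
      (‖c₁‖ + 2 * ‖c₂‖ / σ + ‖c₃‖ / σ ^ 2) * (N₁ * N₂) := by
  have hb₁' : ‖b₁‖ ≤ N₁ / σ := by rwa [le_div_iff₀' hσ]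
  have hb₂' : ‖b₂‖ ≤ N₂ / σ := by rwa [le_div_iff₀' hσ]
  have hN₁ : 0 ≤ N₁ := (norm_nonneg _).trans ha₁
  have hN₂ : 0 ≤ N₂ := (norm_nonneg _).trans ha₂
  calc ‖c₁ * (a₁ * a₂) + c₂ * (a₁ * b₂ + b₁ * a₂) + c₃ * (b₁ * b₂)‖
      ≤ ‖c₁‖ * (‖a₁‖ * ‖a₂‖) + ‖c₂‖ * (‖a₁‖ * ‖b₂‖ + ‖b₁‖ * ‖a₂‖) + ‖c₃‖ * (‖b₁‖ * ‖b₂‖) := by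
        refine (norm_add₃_le ..).trans ?_
        simp only [norm_mul]
        gcongr
        exact (norm_add_le _ _).trans_eq (by rw [norm_mul, norm_mul])
    _ ≤ ‖c₁‖ * (N₁ * N₂) + ‖c₂‖ * (N₁ * (N₂ / σ) + N₁ / σ * N₂) + ‖c₃‖ * (N₁ / σ * (N₂ / σ)) := by
        gcongr
    _ = (‖c₁‖ + 2 * ‖c₂‖ / σ + ‖c₃‖ / σ ^ 2) * (N₁ * N₂) := by
        field_simp
        ring

section ChangeOfCoordinates

variable {R : Type*} [CommRing R] (r x₁ y₁ x₂ y₂ : R)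

theorem sq_one_add_sq_mul_fst_eq :
    (1 + r ^ 2) ^ 2 * (x₁ * x₂ + r * (y₁ * y₂)) =
      (1 + r ^ 3) * ((x₁ + r * y₁) * (x₂ + r * y₂)) +
        (r ^ 2 - r) * ((x₁ + r * y₁) * (y₂ - r * x₂) + (y₁ - r * x₁) * (x₂ + r * y₂)) +
        (r ^ 2 + r) * ((y₁ - r * x₁) * (y₂ - r * x₂)) := by
  ring

theorem sq_one_add_sq_mul_snd_eq :
    (1 + r ^ 2) ^ 2 * (y₁ * y₂ - r * (x₁ * x₂)) =
      (r ^ 2 - r) * ((x₁ + r * y₁) * (x₂ + r * y₂)) +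
        (r ^ 2 + r) * ((x₁ + r * y₁) * (y₂ - r * x₂) + (y₁ - r * x₁) * (x₂ + r * y₂)) +
        (1 - r ^ 3) * ((y₁ - r * x₁) * (y₂ - r * x₂)) := by
  ring

end ChangeOfCoordinates

theorem normRS_nonneg (r σ : ℝ) (v : ℂ × ℂ) : 0 ≤ normRS r σ v :=
  (norm_nonneg _).trans (le_max_left _ _)

section CmulBounds

variable {r σ : ℝ} (v w : ℂ × ℂ)

theorem norm_fst_cmul_le (hσ : 0 < σ) :
    ‖(cmul v w).1 + (r : ℂ) * (cmul v w).2‖ * (1 + r ^ 2) ^ 2 ≤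
      σ * (|1 + r ^ 3| / σ + 2 * |r ^ 2 - r| / σ ^ 2 + |r ^ 2 + r| / σ ^ 3) *
        (normRS r σ v * normRS r σ w) := by
  have key := norm_bilinear_le (N₁ := normRS r σ v) (N₂ := normRS r σ w) hσ
    (le_max_left _ _) (le_max_left _ _) (le_max_right _ _) (le_max_right _ _)
    ((1 + r ^ 3 : ℝ) : ℂ) ((r ^ 2 - r : ℝ) : ℂ) ((r ^ 2 + r : ℝ) : ℂ)
  calc ‖(cmul v w).1 + (r : ℂ) * (cmul v w).2‖ * (1 + r ^ 2) ^ 2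
      = ‖((1 + r ^ 2 : ℝ) : ℂ) ^ 2 * ((cmul v w).1 + (r : ℂ) * (cmul v w).2)‖ := by
        rw [norm_mul, norm_pow, Complex.norm_real, Real.norm_of_nonneg (by positivity), mul_comm]
    _ ≤ (|1 + r ^ 3| + 2 * |r ^ 2 - r| / σ + |r ^ 2 + r| / σ ^ 2) *
          (normRS r σ v * normRS r σ w) := by
        simp only [Complex.norm_real, Real.norm_eq_abs] at key
        push_cast at key ⊢
        simpa only [cmul, sq_one_add_sq_mul_fst_eq] using key
    _ = _ := by
        field_simp

theorem norm_snd_cmul_le (hσ : 0 < σ) :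
    σ * ‖(cmul v w).2 - (r : ℂ) * (cmul v w).1‖ * (1 + r ^ 2) ^ 2 ≤
      σ * (|r ^ 2 - r| + 2 * |r ^ 2 + r| / σ + |1 - r ^ 3| / σ ^ 2) *
        (normRS r σ v * normRS r σ w) := by
  have key := norm_bilinear_le (N₁ := normRS r σ v) (N₂ := normRS r σ w) hσ
    (le_max_left _ _) (le_max_left _ _) (le_max_right _ _) (le_max_right _ _)
    ((r ^ 2 - r : ℝ) : ℂ) ((r ^ 2 + r : ℝ) : ℂ) ((1 - r ^ 3 : ℝ) : ℂ)
  rw [mul_assoc σ, mul_assoc σ]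
  refine mul_le_mul_of_nonneg_left ?_ hσ.le
  calc ‖(cmul v w).2 - (r : ℂ) * (cmul v w).1‖ * (1 + r ^ 2) ^ 2
      = ‖((1 + r ^ 2 : ℝ) : ℂ) ^ 2 * ((cmul v w).2 - (r : ℂ) * (cmul v w).1)‖ := by
        rw [norm_mul, norm_pow, Complex.norm_real, Real.norm_of_nonneg (by positivity), mul_comm]
    _ ≤ _ := by
        simp only [Complex.norm_real, Real.norm_eq_abs] at key
        push_cast at key ⊢
        simpa only [cmul, sq_one_add_sq_mul_snd_eq] using key

end CmulBounds

/-- The multiplication bound for `‖·‖_{r,σ}` with the exact constant `C`. -/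
theorem normRS_mul_le (r σ : ℝ) (hσ : 1 ≤ σ) :
    ∀ v w : ℂ × ℂ,
      normRS r σ (cmul v w) ≤
        σ / (1 + r ^ 2) ^ 2 *
          max (|1 + r ^ 3| / σ + 2 * |r ^ 2 - r| / σ ^ 2 + |r ^ 2 + r| / σ ^ 3)
              (|r ^ 2 - r| + 2 * |r ^ 2 + r| / σ + |1 - r ^ 3| / σ ^ 2) *
          (normRS r σ v * normRS r σ w) := by
  intro v w
  have hσ₀ : 0 < σ := one_pos.trans_le hσ
  have hN : 0 ≤ normRS r σ v * normRS r σ w := mul_nonneg (normRS_nonneg ..) (normRS_nonneg ..)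
  have hd : 0 < (1 + r ^ 2) ^ 2 := by positivity
  rw [div_mul_eq_mul_div, div_mul_eq_mul_div, le_div_iff₀ hd, normRS,
    max_mul_of_nonneg _ _ hd.le]
  refine max_le ?_ ?_
  · refine (norm_fst_cmul_le v w hσ₀).trans ?_
    gcongr σ * ?_ * _
    exact le_max_left _ _
  · refine (norm_snd_cmul_le v w hσ₀).trans ?_
    gcongr σ * ?_ * _
    exact le_max_right _ _
end
end

section
/- For every r ∈ ℝ, max{ |1+r³| + 2|r²−r| + |r²+r| , |r²−r| + 2|r²+r| + |1−r³| } ≤ 2(1+r²)²; consequently, for every r ∈ ℝ and σ ∈ [1, ∞), ‖v * w‖_{r,σ} ≤ 2σ·‖v‖_{r,σ}·‖w‖_{r,σ} for all v, w ∈ ℂ². -/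
/-! In the coordinates `a = x + r y`, `b = y - r x` the coordinatewise product becomes a
bilinear expression: `(1 + r²)²` times the coordinates of `v * w` equals
`p a₁a₂ + q (a₁b₂ + b₁a₂) + s b₁b₂`, with `(p, q, s) = (1 + r³, r² - r, r² + r)` for the first
coordinate and `(r² - r, r² + r, 1 - r³)` for the second. The elementary bound
`|p| + 2|q| + |s| ≤ 2(1 + r²)²` gives `‖v * w‖_{r,1} ≤ 2‖v‖_{r,1}‖w‖_{r,1}`, and for `σ ≥ 1` the
norms `‖·‖_{r,1} ≤ ‖·‖_{r,σ} ≤ σ‖·‖_{r,1}` are comparable. -/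

noncomputable section

theorem abs_one_add_cube_add_abs_le (r : ℝ) :
    |1 + r ^ 3| + 2 * |r ^ 2 - r| + |r ^ 2 + r| ≤ 2 * (1 + r ^ 2) ^ 2 := by
  have hcube : 1 + r ^ 3 = (1 + r) * ((r - 1 / 2) ^ 2 + 3 / 4) := by ring
  rcases le_total r (-1) with h | h
  · rw [abs_of_nonpos (hcube ▸ mul_nonpos_of_nonpos_of_nonneg (by linarith) (by positivity)),
      abs_of_nonneg (by nlinarith), abs_of_nonneg (by nlinarith)]
    nlinarith [sq_nonneg (r + 1), sq_nonneg r]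
  rw [abs_of_nonneg (hcube ▸ mul_nonneg (by linarith) (by positivity))]
  rcases le_total r 0 with h' | h'
  · rw [abs_of_nonneg (by nlinarith), abs_of_nonpos (by nlinarith)]
    nlinarith [sq_nonneg (r + 1), sq_nonneg r]
  rcases le_total r 1 with h'' | h''
  · rw [abs_of_nonpos (by nlinarith), abs_of_nonneg (by nlinarith)]
    nlinarith [sq_nonneg (r - 1), sq_nonneg r]
  · rw [abs_of_nonneg (by nlinarith), abs_of_nonneg (by nlinarith)]
    nlinarith [sq_nonneg (r - 1), sq_nonneg r]

theorem abs_sub_add_abs_one_sub_cube_le (r : ℝ) :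
    |r ^ 2 - r| + 2 * |r ^ 2 + r| + |1 - r ^ 3| ≤ 2 * (1 + r ^ 2) ^ 2 := by
  have h := abs_one_add_cube_add_abs_le (-r)
  rw [show 1 + (-r) ^ 3 = 1 - r ^ 3 by ring, show (-r) ^ 2 - -r = r ^ 2 + r by ring,
    show (-r) ^ 2 + -r = r ^ 2 - r by ring, neg_sq] at h
  linarith

theorem norm_bilinear_combination_le {R : Type*} [SeminormedRing R] (p q s a₁ b₁ a₂ b₂ : R) :
    ‖p * (a₁ * a₂) + q * (a₁ * b₂ + b₁ * a₂) + s * (b₁ * b₂)‖ ≤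
      (‖p‖ + 2 * ‖q‖ + ‖s‖) * (max ‖a₁‖ ‖b₁‖ * max ‖a₂‖ ‖b₂‖) := by
  set M := max ‖a₁‖ ‖b₁‖ * max ‖a₂‖ ‖b₂‖
  have hprod : ∀ {c₁ c₂ : R}, ‖c₁‖ ≤ max ‖a₁‖ ‖b₁‖ → ‖c₂‖ ≤ max ‖a₂‖ ‖b₂‖ → ‖c₁ * c₂‖ ≤ M :=
    fun h₁ h₂ => (norm_mul_le _ _).trans (mul_le_mul h₁ h₂ (norm_nonneg _)
      ((norm_nonneg _).trans (le_max_left _ _)))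
  have haa : ‖a₁ * a₂‖ ≤ M := hprod (le_max_left _ _) (le_max_left _ _)
  have hab : ‖a₁ * b₂ + b₁ * a₂‖ ≤ 2 * M := (norm_add_le _ _).trans (by
    linarith [hprod (le_max_left _ _) (le_max_right ‖a₂‖ _),
      hprod (le_max_right ‖a₁‖ _) (le_max_left _ _)])
  have hbb : ‖b₁ * b₂‖ ≤ M := hprod (le_max_right _ _) (le_max_right _ _)
  calc _ ≤ ‖p‖ * ‖a₁ * a₂‖ + ‖q‖ * ‖a₁ * b₂ + b₁ * a₂‖ + ‖s‖ * ‖b₁ * b₂‖ :=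
        (norm_add₃_le ..).trans (add_le_add_three (norm_mul_le _ _) (norm_mul_le _ _)
          (norm_mul_le _ _))
    _ ≤ ‖p‖ * M + ‖q‖ * (2 * M) + ‖s‖ * M := by gcongr
    _ = (‖p‖ + 2 * ‖q‖ + ‖s‖) * M := by ring

def rotCoords (r : ℝ) (v : ℂ × ℂ) : ℂ × ℂ := (v.1 + r * v.2, v.2 - r * v.1)

theorem normRS_eq (r σ : ℝ) (v : ℂ × ℂ) :
    normRS r σ v = max ‖(rotCoords r v).1‖ (σ * ‖(rotCoords r v).2‖) := rfl

theorem normRS_mono {r τ σ : ℝ} (h : τ ≤ σ) (v : ℂ × ℂ) : normRS r τ v ≤ normRS r σ v :=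
  max_le_max le_rfl (mul_le_mul_of_nonneg_right h (norm_nonneg _))

theorem normRS_le_mul_normRS_one {r σ : ℝ} (hσ : 1 ≤ σ) (v : ℂ × ℂ) :
    normRS r σ v ≤ σ * normRS r 1 v := by
  rw [normRS, normRS, one_mul, mul_max_of_nonneg _ _ (zero_le_one.trans hσ)]
  exact max_le_max (le_mul_of_one_le_left (norm_nonneg _) hσ) le_rfl

theorem one_add_sq_sq_mul_rotCoords_cmul_fst (r : ℝ) (v w : ℂ × ℂ) :
    (((1 + r ^ 2) ^ 2 : ℝ) : ℂ) * (rotCoords r (cmul v w)).1 =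
      ((1 + r ^ 3 : ℝ) : ℂ) * ((rotCoords r v).1 * (rotCoords r w).1) +
      ((r ^ 2 - r : ℝ) : ℂ) * ((rotCoords r v).1 * (rotCoords r w).2 +
        (rotCoords r v).2 * (rotCoords r w).1) +
      ((r ^ 2 + r : ℝ) : ℂ) * ((rotCoords r v).2 * (rotCoords r w).2) := by
  simp only [rotCoords, cmul]
  push_cast
  ring

theorem one_add_sq_sq_mul_rotCoords_cmul_snd (r : ℝ) (v w : ℂ × ℂ) :
    (((1 + r ^ 2) ^ 2 : ℝ) : ℂ) * (rotCoords r (cmul v w)).2 =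
      ((r ^ 2 - r : ℝ) : ℂ) * ((rotCoords r v).1 * (rotCoords r w).1) +
      ((r ^ 2 + r : ℝ) : ℂ) * ((rotCoords r v).1 * (rotCoords r w).2 +
        (rotCoords r v).2 * (rotCoords r w).1) +
      ((1 - r ^ 3 : ℝ) : ℂ) * ((rotCoords r v).2 * (rotCoords r w).2) := by
  simp only [rotCoords, cmul]
  push_cast
  ring

theorem normRS_one_cmul_le (r : ℝ) (v w : ℂ × ℂ) :
    normRS r 1 (cmul v w) ≤ 2 * (normRS r 1 v * normRS r 1 w) := by
  have hN : ∀ u : ℂ × ℂ, normRS r 1 u = max ‖(rotCoords r u).1‖ ‖(rotCoords r u).2‖ := fun u => by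
    rw [normRS_eq, one_mul]
  set a₁ := (rotCoords r v).1
  set b₁ := (rotCoords r v).2
  set a₂ := (rotCoords r w).1
  set b₂ := (rotCoords r w).2
  set c := (1 + r ^ 2) ^ 2
  set N := normRS r 1 v * normRS r 1 w
  have hc : 0 < c := by positivity
  have hbound : ∀ (p q s : ℝ) (z : ℂ), |p| + 2 * |q| + |s| ≤ 2 * c →
      (c : ℂ) * z = p * (a₁ * a₂) + q * (a₁ * b₂ + b₁ * a₂) + s * (b₁ * b₂) → ‖z‖ ≤ 2 * N := by
    intro p q s z hpqs hz
    refine le_of_mul_le_mul_left ?_ hc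
    calc c * ‖z‖ = ‖(c : ℂ) * z‖ := by rw [norm_mul, Complex.norm_real, Real.norm_of_nonneg hc.le]
      _ ≤ (|p| + 2 * |q| + |s|) * N := by
          have h := norm_bilinear_combination_le (p : ℂ) q s a₁ b₁ a₂ b₂
          simp only [Complex.norm_real, Real.norm_eq_abs] at h
          rwa [← hz, ← hN v, ← hN w] at h
      _ ≤ 2 * c * N :=
          mul_le_mul_of_nonneg_right hpqs (mul_nonneg (normRS_nonneg ..) (normRS_nonneg ..))
      _ = c * (2 * N) := by ring
  rw [hN]
  exact max_le
    (hbound _ _ _ _ (abs_one_add_cube_add_abs_le r) (one_add_sq_sq_mul_rotCoords_cmul_fst r v w))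
    (hbound _ _ _ _ (abs_sub_add_abs_one_sub_cube_le r)
      (one_add_sq_sq_mul_rotCoords_cmul_snd r v w))

/-- The bound `max{...} ≤ 2(1+r²)²`, and the resulting submultiplicativity estimate
`‖v * w‖_{r,σ} ≤ 2σ·‖v‖_{r,σ}·‖w‖_{r,σ}`. -/
theorem normRS_mul_le_two_sigma (r : ℝ) :
    max (|1 + r ^ 3| + 2 * |r ^ 2 - r| + |r ^ 2 + r|)
        (|r ^ 2 - r| + 2 * |r ^ 2 + r| + |1 - r ^ 3|) ≤ 2 * (1 + r ^ 2) ^ 2 ∧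
    ∀ σ : ℝ, 1 ≤ σ → ∀ v w : ℂ × ℂ,
      normRS r σ (cmul v w) ≤ 2 * σ * (normRS r σ v * normRS r σ w) := by
  refine ⟨max_le (abs_one_add_cube_add_abs_le r) (abs_sub_add_abs_one_sub_cube_le r), ?_⟩
  intro σ hσ v w
  calc normRS r σ (cmul v w) ≤ σ * normRS r 1 (cmul v w) := normRS_le_mul_normRS_one hσ _
    _ ≤ σ * (2 * (normRS r 1 v * normRS r 1 w)) :=
        mul_le_mul_of_nonneg_left (normRS_one_cmul_le r v w) (by linarith)
    _ ≤ σ * (2 * (normRS r σ v * normRS r σ w)) := by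
        gcongr
        · exact normRS_nonneg ..
        · exact normRS_nonneg ..
        · exact normRS_mono hσ v
        · exact normRS_mono hσ w
    _ = 2 * σ * (normRS r σ v * normRS r σ w) := by ring
end
end

section
/- For r ∈ ℝ and σ : ℕ → [1, ∞), A_{r,σ} is a subalgebra of c₀(ℕ), and for all f, g ∈ A_{r,σ} one has fg ∈ A_{r,σ}, ‖fg‖_{r,σ} ≤ ‖f‖_{r,σ}·‖g‖_{r,σ}, and ‖f‖_∞ ≤ ‖f‖_{r,σ}. -/
open Filter Topology

noncomputable section

/-!
Write `u = a + r b` and `v = b - r a` for a block `(a, b) = (f (2n), f (2n+1))`. Since `r` is real,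
`(a, b) ↦ (u, v)` is `√(1 + r²)` times an isometry of `ℂ²`, so `|u|, |v| ≤ X` forces
`(1 + r²)(|a|² + |b|²) ≤ 2X²`. For a product block `(ac, bd)` the Cauchy–Schwarz inequality then
bounds `|ac + r bd|` and `|bd - r ac|` by `2XY`; this factor `2`, together with `σ ≥ 1`, is absorbed
by the factor `2σ(n)` in the block norm. The same bound gives `|a|, |b| ≤ 2X`, hence `‖f‖_∞ ≤ ‖f‖_{r,σ}`.
-/

section PairEstimates

variable {r X Y : ℝ} {a b c d : ℂ}

lemma norm_add_mul_sq_add_norm_sub_mul_sq (r : ℝ) (a b : ℂ) :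
    ‖a + r * b‖ ^ 2 + ‖b - r * a‖ ^ 2 = (1 + r ^ 2) * (‖a‖ ^ 2 + ‖b‖ ^ 2) := by
  simp only [Complex.sq_norm, Complex.normSq_apply, Complex.add_re, Complex.add_im,
    Complex.sub_re, Complex.sub_im, Complex.mul_re, Complex.mul_im, Complex.ofReal_re,
    Complex.ofReal_im]
  ring

lemma sq_norm_add_sq_norm_le (hu : ‖a + r * b‖ ≤ X) (hv : ‖b - r * a‖ ≤ X) :
    (1 + r ^ 2) * (‖a‖ ^ 2 + ‖b‖ ^ 2) ≤ 2 * X ^ 2 := by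
  rw [← norm_add_mul_sq_add_norm_sub_mul_sq]
  have hu2 := pow_le_pow_left₀ (norm_nonneg _) hu 2
  have hv2 := pow_le_pow_left₀ (norm_nonneg _) hv 2
  linarith

lemma norm_le_two_mul_of_sq_le (hX : 0 ≤ X)
    (h : (1 + r ^ 2) * (‖a‖ ^ 2 + ‖b‖ ^ 2) ≤ 2 * X ^ 2) : ‖a‖ ≤ 2 * X := by
  refine le_of_pow_le_pow_left₀ two_ne_zero (by positivity) ?_
  nlinarith [sq_nonneg r, sq_nonneg ‖b‖, sq_nonneg ‖a‖, sq_nonneg X]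

lemma norm_mul_add_abs_mul_norm_mul_le (hX : 0 ≤ X) (hY : 0 ≤ Y)
    (hab : (1 + r ^ 2) * (‖a‖ ^ 2 + ‖b‖ ^ 2) ≤ 2 * X ^ 2)
    (hcd : (1 + r ^ 2) * (‖c‖ ^ 2 + ‖d‖ ^ 2) ≤ 2 * Y ^ 2) :
    ‖a‖ * ‖c‖ + |r| * (‖b‖ * ‖d‖) ≤ 2 * (X * Y) := by
  have cauchy_schwarz : (‖a‖ * ‖c‖ + |r| * (‖b‖ * ‖d‖)) ^ 2
      ≤ (‖a‖ ^ 2 + ‖b‖ ^ 2) * (‖c‖ ^ 2 + |r| ^ 2 * ‖d‖ ^ 2) := by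
    nlinarith [sq_nonneg (‖a‖ * (|r| * ‖d‖) - ‖b‖ * ‖c‖)]
  have weight : ‖c‖ ^ 2 + |r| ^ 2 * ‖d‖ ^ 2 ≤ (1 + r ^ 2) * (‖c‖ ^ 2 + ‖d‖ ^ 2) := by
    nlinarith [sq_abs r, sq_nonneg r, sq_nonneg ‖c‖, sq_nonneg ‖d‖, sq_nonneg (r * ‖c‖)]
  have one_le : 1 ≤ 1 + r ^ 2 := le_add_of_nonneg_right (sq_nonneg r)
  refine le_of_pow_le_pow_left₀ two_ne_zero (by positivity) ?_
  calc (‖a‖ * ‖c‖ + |r| * (‖b‖ * ‖d‖)) ^ 2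
      ≤ (‖a‖ ^ 2 + ‖b‖ ^ 2) * ((1 + r ^ 2) * (‖c‖ ^ 2 + ‖d‖ ^ 2)) :=
        cauchy_schwarz.trans (by gcongr)
    _ ≤ (‖a‖ ^ 2 + ‖b‖ ^ 2) * (2 * Y ^ 2) := by gcongr
    _ ≤ (1 + r ^ 2) * (‖a‖ ^ 2 + ‖b‖ ^ 2) * (2 * Y ^ 2) := by
        gcongr; exact le_mul_of_one_le_left (by positivity) one_le
    _ ≤ (2 * X ^ 2) * (2 * Y ^ 2) := by gcongr
    _ = (2 * (X * Y)) ^ 2 := by ring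

lemma norm_mul_add_mul_mul_le (hX : 0 ≤ X) (hY : 0 ≤ Y)
    (hab : (1 + r ^ 2) * (‖a‖ ^ 2 + ‖b‖ ^ 2) ≤ 2 * X ^ 2)
    (hcd : (1 + r ^ 2) * (‖c‖ ^ 2 + ‖d‖ ^ 2) ≤ 2 * Y ^ 2) :
    ‖a * c + r * (b * d)‖ ≤ 2 * (X * Y) := by
  refine (norm_add_le _ _).trans (le_trans ?_ (norm_mul_add_abs_mul_norm_mul_le hX hY hab hcd))
  simp only [norm_mul, Complex.norm_real, Real.norm_eq_abs, le_refl]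

lemma norm_mul_sub_mul_mul_le (hX : 0 ≤ X) (hY : 0 ≤ Y)
    (hab : (1 + r ^ 2) * (‖a‖ ^ 2 + ‖b‖ ^ 2) ≤ 2 * X ^ 2)
    (hcd : (1 + r ^ 2) * (‖c‖ ^ 2 + ‖d‖ ^ 2) ≤ 2 * Y ^ 2) :
    ‖b * d - r * (a * c)‖ ≤ 2 * (X * Y) := by
  rw [add_comm (‖a‖ ^ 2)] at hab
  rw [add_comm (‖c‖ ^ 2)] at hcd
  refine (norm_sub_le _ _).trans (le_trans ?_ (norm_mul_add_abs_mul_norm_mul_le hX hY hab hcd))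
  simp only [norm_mul, Complex.norm_real, Real.norm_eq_abs, le_refl]

end PairEstimates

section Blocks

variable {r : ℝ} {σ : ℕ → ℝ} {f g : ℕ → ℂ} {n : ℕ}

def blockMax (r : ℝ) (σ : ℕ → ℝ) (f : ℕ → ℂ) (n : ℕ) : ℝ :=
  max ‖f (2 * n) + (r : ℂ) * f (2 * n + 1)‖ (σ n * ‖f (2 * n + 1) - (r : ℂ) * f (2 * n)‖)

lemma blockNorm_eq : blockNorm r σ f n = 2 * σ n * blockMax r σ f n := rfl

lemma blockMax_nonneg : 0 ≤ blockMax r σ f n := (norm_nonneg _).trans (le_max_left _ _)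

lemma blockNorm_nonneg (hσ : 0 ≤ σ n) : 0 ≤ blockNorm r σ f n :=
  mul_nonneg (mul_nonneg zero_le_two hσ) blockMax_nonneg

lemma sq_norm_add_sq_norm_le_blockMax (hσ : 1 ≤ σ n) :
    (1 + r ^ 2) * (‖f (2 * n)‖ ^ 2 + ‖f (2 * n + 1)‖ ^ 2) ≤ 2 * blockMax r σ f n ^ 2 :=
  sq_norm_add_sq_norm_le (le_max_left _ _)
    ((le_mul_of_one_le_left (norm_nonneg _) hσ).trans (le_max_right _ _))

lemma blockMax_add_le (hσ : 0 ≤ σ n) :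
    blockMax r σ (f + g) n ≤ blockMax r σ f n + blockMax r σ g n := by
  simp only [blockMax, Pi.add_apply]
  refine le_trans (max_le_max ?_ ?_) max_add_add_le_max_add_max
  · rw [show f (2 * n) + g (2 * n) + (r : ℂ) * (f (2 * n + 1) + g (2 * n + 1))
        = (f (2 * n) + r * f (2 * n + 1)) + (g (2 * n) + r * g (2 * n + 1)) by ring]
    exact norm_add_le _ _
  · rw [show f (2 * n + 1) + g (2 * n + 1) - (r : ℂ) * (f (2 * n) + g (2 * n))
        = (f (2 * n + 1) - r * f (2 * n)) + (g (2 * n + 1) - r * g (2 * n)) by ring, ← mul_add]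
    exact mul_le_mul_of_nonneg_left (norm_add_le _ _) hσ

lemma blockNorm_add_le (hσ : 0 ≤ σ n) :
    blockNorm r σ (f + g) n ≤ blockNorm r σ f n + blockNorm r σ g n := by
  simp only [blockNorm_eq, ← mul_add]
  gcongr
  exact blockMax_add_le hσ

lemma blockNorm_smul (c : ℂ) : blockNorm r σ (c • f) n = ‖c‖ * blockNorm r σ f n := by
  have hu : c * f (2 * n) + r * (c * f (2 * n + 1)) = c * (f (2 * n) + r * f (2 * n + 1)) := by
    ring
  have hv : c * f (2 * n + 1) - r * (c * f (2 * n)) = c * (f (2 * n + 1) - r * f (2 * n)) := by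
    ring
  simp only [blockNorm_eq, blockMax, Pi.smul_apply, smul_eq_mul, hu, hv, norm_mul,
    mul_left_comm (σ n) ‖c‖, ← mul_max_of_nonneg _ _ (norm_nonneg c)]
  ring

lemma blockMax_mul_le (hσ : 1 ≤ σ n) :
    blockMax r σ (f * g) n ≤ 2 * σ n * (blockMax r σ f n * blockMax r σ g n) := by
  have hf := sq_norm_add_sq_norm_le_blockMax (r := r) (f := f) hσ
  have hg := sq_norm_add_sq_norm_le_blockMax (r := r) (f := g) hσ
  have hXY : 0 ≤ 2 * (blockMax r σ f n * blockMax r σ g n) :=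
    mul_nonneg zero_le_two (mul_nonneg blockMax_nonneg blockMax_nonneg)
  refine max_le ?_ ?_ <;> simp only [Pi.mul_apply]
  · calc _ ≤ 2 * (blockMax r σ f n * blockMax r σ g n) :=
          norm_mul_add_mul_mul_le blockMax_nonneg blockMax_nonneg hf hg
      _ ≤ σ n * (2 * (blockMax r σ f n * blockMax r σ g n)) := le_mul_of_one_le_left hXY hσ
      _ = _ := by ring
  · calc _ ≤ σ n * (2 * (blockMax r σ f n * blockMax r σ g n)) :=
          mul_le_mul_of_nonneg_left
            (norm_mul_sub_mul_mul_le blockMax_nonneg blockMax_nonneg hf hg) (by linarith)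
      _ = _ := by ring

lemma blockNorm_mul_le (hσ : 1 ≤ σ n) :
    blockNorm r σ (f * g) n ≤ blockNorm r σ f n * blockNorm r σ g n := by
  calc blockNorm r σ (f * g) n ≤ 2 * σ n * (2 * σ n * (blockMax r σ f n * blockMax r σ g n)) :=
        mul_le_mul_of_nonneg_left (blockMax_mul_le hσ) (by linarith)
    _ = blockNorm r σ f n * blockNorm r σ g n := by simp only [blockNorm_eq]; ring

lemma norm_le_blockNorm (hσ : ∀ n, 1 ≤ σ n) (k : ℕ) : ‖f k‖ ≤ blockNorm r σ f (k / 2) := by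
  have hX := sq_norm_add_sq_norm_le_blockMax (r := r) (f := f) (hσ (k / 2))
  have hblock : 2 * blockMax r σ f (k / 2) ≤ blockNorm r σ f (k / 2) := by
    rw [blockNorm_eq, mul_right_comm]
    exact le_mul_of_one_le_right (mul_nonneg zero_le_two blockMax_nonneg) (hσ _)
  refine le_trans ?_ hblock
  rcases Nat.even_or_odd' k with ⟨m, rfl | rfl⟩
  · rw [show 2 * m / 2 = m by omega] at hX ⊢
    exact norm_le_two_mul_of_sq_le blockMax_nonneg hX
  · rw [show (2 * m + 1) / 2 = m by omega, add_comm (‖f (2 * m)‖ ^ 2)] at hX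
    rw [show (2 * m + 1) / 2 = m by omega]
    exact norm_le_two_mul_of_sq_le blockMax_nonneg hX

end Blocks

section Algebra

variable {r : ℝ} {σ : ℕ → ℝ} {f g : ℕ → ℂ}

lemma le_Anorm (hf : f ∈ Aset r σ) (n : ℕ) : blockNorm r σ f n ≤ Anorm r σ f :=
  le_ciSup hf.2.bddAbove_range n

lemma Aset.smul_mem (c : ℂ) (hf : f ∈ Aset r σ) : c • f ∈ Aset r σ := by
  have hc0 := hf.1.const_mul c
  have hblock := hf.2.const_mul ‖c‖
  rw [mul_zero] at hc0 hblock
  exact ⟨hc0, hblock.congr fun n => (blockNorm_smul c).symm⟩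

variable (hσ : ∀ n, 1 ≤ σ n)
include hσ

lemma Anorm_nonneg (hf : f ∈ Aset r σ) : 0 ≤ Anorm r σ f :=
  (blockNorm_nonneg (zero_le_one.trans (hσ 0))).trans (le_Anorm hf 0)

lemma Aset.add_mem (hf : f ∈ Aset r σ) (hg : g ∈ Aset r σ) : f + g ∈ Aset r σ := by
  refine ⟨by have hc0 := hf.1.add hg.1; rwa [add_zero] at hc0, ?_⟩
  exact squeeze_zero (fun n => blockNorm_nonneg (zero_le_one.trans (hσ n)))
    (fun n => blockNorm_add_le (zero_le_one.trans (hσ n))) (by simpa using hf.2.add hg.2)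

lemma Aset.mul_mem (hf : f ∈ Aset r σ) (hg : g ∈ Aset r σ) : f * g ∈ Aset r σ := by
  refine ⟨by have hc0 := hf.1.mul hg.1; rwa [mul_zero] at hc0, ?_⟩
  exact squeeze_zero (fun n => blockNorm_nonneg (zero_le_one.trans (hσ n)))
    (fun n => blockNorm_mul_le (hσ n)) (by simpa using hf.2.mul hg.2)

lemma Anorm_mul_le (hf : f ∈ Aset r σ) (hg : g ∈ Aset r σ) :
    Anorm r σ (f * g) ≤ Anorm r σ f * Anorm r σ g :=
  ciSup_le fun n => (blockNorm_mul_le (hσ n)).trans <|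
    mul_le_mul (le_Anorm hf n) (le_Anorm hg n) (blockNorm_nonneg (zero_le_one.trans (hσ n)))
      (Anorm_nonneg hσ hf)

lemma supNorm_le_Anorm (hf : f ∈ Aset r σ) : supNorm f ≤ Anorm r σ f :=
  ciSup_le fun k => (norm_le_blockNorm hσ k).trans (le_Anorm hf _)

end Algebra

/-- `A_{r,σ}` is a subalgebra of `c₀(ℕ)`, the norm `‖·‖_{r,σ}` is submultiplicative on it,
and it dominates the sup norm. -/
theorem Aset_subalgebra (r : ℝ) (σ : ℕ → ℝ) (hσ : ∀ n, 1 ≤ σ n) :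
    (Aset r σ ⊆ c0) ∧
    (∀ f ∈ Aset r σ, ∀ g ∈ Aset r σ, f + g ∈ Aset r σ) ∧
    (∀ (c : ℂ), ∀ f ∈ Aset r σ, c • f ∈ Aset r σ) ∧
    (∀ f ∈ Aset r σ, ∀ g ∈ Aset r σ,
      f * g ∈ Aset r σ ∧ Anorm r σ (f * g) ≤ Anorm r σ f * Anorm r σ g) ∧
    (∀ f ∈ Aset r σ, supNorm f ≤ Anorm r σ f) :=
  ⟨fun _ hf => hf.1, fun _ hf _ hg => Aset.add_mem hσ hf hg, fun c _ hf => Aset.smul_mem c hf,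
    fun _ hf _ hg => ⟨Aset.mul_mem hσ hf hg, Anorm_mul_le hσ hf hg⟩,
    fun _ hf => supNorm_le_Anorm hσ hf⟩
end
end

section
/- Let σ : ℕ → [1, ∞) be unbounded. Then the algebra A_{1,σ} (the case r = 1) is not an ideal in c₀(ℕ): there exist f ∈ A_{1,σ} and g ∈ c₀(ℕ) such that the pointwise product fg does not lie in A_{1,σ}. -/
open Filter Topology

noncomputable section

/-!
Take `f` constant on each pair `{2n, 2n+1}`, with value `aₙ`, and `g` supported on the even
indices, with `g (2n) = bₙ`. The block norm of `f` only sees `f (2n) + f (2n+1)` and is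
`4 σ(n) |aₙ|`, whereas `f g` vanishes at odd indices, so its block norm sees the difference
and is `2 σ(n)² |aₙ bₙ|`. Along a sparse set of indices on which `σ → ∞` put
`aₙ = σ(n)^(-3/2)` and `bₙ = σ(n)^(-1/2)`: then `σ a → 0` and `b → 0`, but `σ² a b = 1`.
-/

open Set

theorem tendsto_of_eq_zero_off_range {E : Type*} [Zero E] [TopologicalSpace E] {φ : ℕ → ℕ}
    (hφ : StrictMono φ) {u : ℕ → E} (hu : ∀ n ∉ range φ, u n = 0)
    (h : Tendsto (u ∘ φ) atTop (𝓝 0)) : Tendsto u atTop (𝓝 0) := by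
  rw [tendsto_atTop'] at h ⊢
  intro s hs
  obtain ⟨K, hK⟩ := h s hs
  refine ⟨φ K, fun n hn => ?_⟩
  by_cases hn' : n ∈ range φ
  · obtain ⟨k, rfl⟩ := hn'
    exact hK k (hφ.le_iff_le.1 hn)
  · rw [hu n hn']
    exact mem_of_mem_nhds hs

theorem exists_strictMono_tendsto_atTop {u : ℕ → ℝ} (hu : ∀ M : ℝ, ∃ n, M < u n) :
    ∃ φ : ℕ → ℕ, StrictMono φ ∧ Tendsto (u ∘ φ) atTop atTop := by
  have hfreq : ∀ k : ℕ, ∃ᶠ n in atTop, (k : ℝ) < u n := by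
    intro k
    by_contra h
    obtain ⟨M, hM⟩ := (isBoundedUnder_of_eventually_le
      ((not_frequently.1 h).mono fun _ => le_of_not_gt)).bddAbove_range
    obtain ⟨n, hn⟩ := hu M
    exact hn.not_ge (hM ⟨n, rfl⟩)
  obtain ⟨φ, hφ, hφu⟩ := extraction_forall_of_frequently hfreq
  exact ⟨φ, hφ, tendsto_atTop_mono (fun k => (hφu k).le) tendsto_natCast_atTop_atTop⟩

def pairSeq (a : ℕ → ℂ) (m : ℕ) : ℂ := a (m / 2)

def evenSeq (b : ℕ → ℂ) (m : ℕ) : ℂ := if Even m then b (m / 2) else 0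

@[simp] theorem pairSeq_two_mul (a : ℕ → ℂ) (n : ℕ) : pairSeq a (2 * n) = a n := by
  simp [pairSeq]

@[simp] theorem pairSeq_two_mul_add_one (a : ℕ → ℂ) (n : ℕ) : pairSeq a (2 * n + 1) = a n := by
  simp [pairSeq, Nat.mul_add_div]

@[simp] theorem evenSeq_two_mul (b : ℕ → ℂ) (n : ℕ) : evenSeq b (2 * n) = b n := by
  simp [evenSeq]

@[simp] theorem evenSeq_two_mul_add_one (b : ℕ → ℂ) (n : ℕ) : evenSeq b (2 * n + 1) = 0 := by
  simp [evenSeq]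

theorem pairSeq_mem_c0 {a : ℕ → ℂ} (ha : Tendsto a atTop (𝓝 0)) : pairSeq a ∈ c0 :=
  ha.comp (Nat.tendsto_div_const_atTop two_ne_zero)

theorem evenSeq_mem_c0 {b : ℕ → ℂ} (hb : Tendsto b atTop (𝓝 0)) : evenSeq b ∈ c0 := by
  refine squeeze_zero_norm (fun m => ?_) (tendsto_norm_zero.comp (pairSeq_mem_c0 hb))
  by_cases hm : Even m <;> simp [evenSeq, pairSeq, hm]

theorem blockNorm_one_pairSeq (σ : ℕ → ℝ) (a : ℕ → ℂ) (n : ℕ) :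
    blockNorm 1 σ (pairSeq a) n = 4 * σ n * ‖a n‖ := by
  rw [blockNorm]
  simp only [pairSeq_two_mul, pairSeq_two_mul_add_one, Complex.ofReal_one, one_mul, sub_self,
    norm_zero, mul_zero, ← two_mul, norm_mul, Complex.norm_two]
  rw [max_eq_left (by positivity)]
  ring

theorem blockNorm_one_of_odd_eq_zero {σ : ℕ → ℝ} {f : ℕ → ℂ} {n : ℕ} (hσ : 1 ≤ σ n)
    (hf : f (2 * n + 1) = 0) : blockNorm 1 σ f n = 2 * σ n ^ 2 * ‖f (2 * n)‖ := by
  rw [blockNorm, hf]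
  simp only [Complex.ofReal_one, one_mul, mul_zero, add_zero, zero_sub, norm_neg]
  rw [max_eq_right (le_mul_of_one_le_left (norm_nonneg _) hσ)]
  ring

theorem pairSeq_mem_Aset_one {σ : ℕ → ℝ} (hσ : ∀ n, 1 ≤ σ n) {a : ℕ → ℂ}
    (ha : Tendsto (fun n => σ n * ‖a n‖) atTop (𝓝 0)) : pairSeq a ∈ Aset 1 σ := by
  refine ⟨pairSeq_mem_c0 (tendsto_zero_iff_norm_tendsto_zero.2 ?_), ?_⟩
  · exact squeeze_zero (fun n => norm_nonneg _)
      (fun n => le_mul_of_one_le_left (norm_nonneg _) (hσ n)) ha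
  · rw [← mul_zero 4]
    exact (ha.const_mul 4).congr fun n => by rw [blockNorm_one_pairSeq, mul_assoc]

theorem pairSeq_mul_evenSeq_notMem_Aset_one {σ : ℕ → ℝ} (hσ : ∀ n, 1 ≤ σ n) {a b : ℕ → ℂ}
    (hab : ∃ᶠ n in atTop, 1 ≤ σ n ^ 2 * ‖a n * b n‖) : pairSeq a * evenSeq b ∉ Aset 1 σ := by
  rintro ⟨-, hlim⟩
  have hblock (n : ℕ) :
      blockNorm 1 σ (pairSeq a * evenSeq b) n = 2 * (σ n ^ 2 * ‖a n * b n‖) := by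
    rw [blockNorm_one_of_odd_eq_zero (hσ n) (by simp)]
    simp [mul_assoc]
  obtain ⟨n, hn, hsmall⟩ := (hab.and_eventually (hlim.eventually (gt_mem_nhds one_pos))).exists
  rw [hblock] at hsmall
  linarith

theorem exists_seq_tendsto_zero_frequently_one_le {σ : ℕ → ℝ} (hσ : ∀ n, 0 < σ n)
    (hσunb : ∀ M : ℝ, ∃ n, M < σ n) :
    ∃ a b : ℕ → ℂ, Tendsto (fun n => σ n * ‖a n‖) atTop (𝓝 0) ∧ Tendsto b atTop (𝓝 0) ∧
      ∃ᶠ n in atTop, 1 ≤ σ n ^ 2 * ‖a n * b n‖ := by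
  obtain ⟨s, hs, rfl⟩ : ∃ s : ℕ → ℝ, (∀ n, 0 < s n) ∧ (fun n => s n ^ 2) = σ :=
    ⟨fun n => √(σ n), fun n => Real.sqrt_pos.2 (hσ n), funext fun n => Real.sq_sqrt (hσ n).le⟩
  obtain ⟨φ, hφ, hsφ⟩ := exists_strictMono_tendsto_atTop hσunb
  have hinv : Tendsto (fun k => (s (φ k))⁻¹) atTop (𝓝 0) :=
    tendsto_inv_atTop_zero.comp <|
      (Real.tendsto_sqrt_atTop.comp hsφ).congr fun k => Real.sqrt_sq (hs (φ k)).le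
  set a : ℕ → ℂ := (range φ).indicator fun n => ((s n : ℂ) ^ 3)⁻¹
  set b : ℕ → ℂ := (range φ).indicator fun n => (s n : ℂ)⁻¹
  have ha (k : ℕ) : ‖a (φ k)‖ = (s (φ k) ^ 3)⁻¹ := by simp [a, (hs _).le]
  have hb (k : ℕ) : ‖b (φ k)‖ = (s (φ k))⁻¹ := by simp [b, (hs _).le]
  refine ⟨a, b, ?_, ?_, ?_⟩
  · refine tendsto_of_eq_zero_off_range hφ (fun n hn => by simp [a, hn]) (hinv.congr fun k => ?_)
    simp only [Function.comp_apply, ha]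
    field_simp [(hs (φ k)).ne']
  · refine tendsto_of_eq_zero_off_range hφ (fun n hn => by simp [b, hn]) ?_
    exact tendsto_zero_iff_norm_tendsto_zero.2 (hinv.congr fun k => (hb k).symm)
  · refine hφ.tendsto_atTop.frequently (Frequently.of_forall fun k => le_of_eq ?_)
    rw [norm_mul, ha, hb]
    field_simp [(hs (φ k)).ne']

/-- For unbounded `σ`, `A_{1,σ}` is not an ideal in `c₀(ℕ)`. -/
theorem Aset_one_not_ideal (σ : ℕ → ℝ) (hσ : ∀ n, 1 ≤ σ n)
    (hσunb : ∀ M : ℝ, ∃ n, M < σ n) :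
    ∃ f ∈ Aset 1 σ, ∃ g ∈ c0, f * g ∉ Aset 1 σ := by
  obtain ⟨a, b, ha, hb, hab⟩ :=
    exists_seq_tendsto_zero_frequently_one_le (fun n => one_pos.trans_le (hσ n)) hσunb
  exact ⟨pairSeq a, pairSeq_mem_Aset_one hσ ha, evenSeq b, evenSeq_mem_c0 hb,
    pairSeq_mul_evenSeq_notMem_Aset_one hσ hab⟩
end
end
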